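/- Fix ħ ∈ ℝ, ħ ≠ 0. Let ξ, η : ℤ → ℂ be finitely supported. For m = (m_1, m_2) ∈ ℤ² define W_{m,ij} = (i/(4πħ)) e^{2πiħ m_1 m_2} e^{4πiħ m_1 i} δ_{j, i+m_2} (for i, j ∈ ℤ) and S_m = Σ_{i,j ∈ ℤ} W_{m,ij} ξ_i η_j = (i/(4πħ)) e^{2πiħ m_1 m_2} Σ_{a∈ℤ} e^{4πiħ m_1 a} ξ_a η_{a+m_2}. Then for all m, n ∈ ℤ²: Σ_{i,j,k,l ∈ ℤ} W_{m,ij} W_{n,kl} (δ_{il} ξ_k η_j − δ_{kj} ξ_i η_l) = (1/(2πħ)) · sin(2πħ (n_1 m_2 − n_2 m_1)) · S_{m+n}, where all sums are finite by the finite support of ξ, η. -/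

import Mathlib

/-- The infinite-matrix representation of the noncommutative torus basis element `T_m`:
`W_{m,ij} = (i/(4πħ)) e^{2πiħ m₁m₂} e^{4πiħ m₁ i} δ_{j, i+m₂}`, `i, j ∈ ℤ`. -/
noncomputable def Wmat (hb : ℝ) (m : ℤ × ℤ) (i j : ℤ) : ℂ :=
  Complex.I / (4 * (Real.pi : ℂ) * (hb : ℂ)) *
    Complex.exp (2 * (Real.pi : ℂ) * Complex.I * (hb : ℂ) * (m.1 : ℂ) * (m.2 : ℂ)) *
    Complex.exp (4 * (Real.pi : ℂ) * Complex.I * (hb : ℂ) * (m.1 : ℂ) * (i : ℂ)) *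
    (if j = i + m.2 then 1 else 0)

/-- The sin-algebra components `S_m = Σ_{i,j} W_{m,ij} ξ_i η_j` of the rank-one infinite
matrix `ξηᵀ` built from finitely supported `ξ, η : ℤ → ℂ`. -/
noncomputable def Smode (hb : ℝ) (ξ η : ℤ →₀ ℂ) (m : ℤ × ℤ) : ℂ :=
  ∑ᶠ (i : ℤ) (j : ℤ), Wmat hb m i j * ξ i * η j

lemma wmat_ne (hb : ℝ) (m : ℤ × ℤ) (i j : ℤ) (h : j ≠ i + m.2) : Wmat hb m i j = 0 := by
  simp [Wmat, h]

/-- The prefactor constant. -/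
noncomputable def Kconst (hb : ℝ) (v : ℂ) : ℂ :=
  Complex.I / (4 * (Real.pi : ℂ) * (hb : ℂ)) *
    Complex.exp (2 * (Real.pi : ℂ) * Complex.I * (hb : ℂ) * v)

/-- The diagonal mode function. -/
noncomputable def Gfun (hb : ℝ) (ξ η : ℤ →₀ ℂ) (p : ℤ × ℤ) (i : ℤ) : ℂ :=
  Wmat hb p i (i + p.2) * ξ i * η (i + p.2)

noncomputable def T1f (hb : ℝ) (ξ η : ℤ →₀ ℂ) (m n : ℤ × ℤ) (i : ℤ) : ℂ :=
  Wmat hb m i (i + m.2) * Wmat hb n (i - n.2) i * (ξ (i - n.2) * η (i + m.2))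

noncomputable def T2f (hb : ℝ) (ξ η : ℤ →₀ ℂ) (m n : ℤ × ℤ) (i : ℤ) : ℂ :=
  Wmat hb m i (i + m.2) * Wmat hb n (i + m.2) (i + m.2 + n.2) * (ξ i * η (i + m.2 + n.2))

lemma Gfun_supp (hb : ℝ) (ξ η : ℤ →₀ ℂ) (p : ℤ × ℤ) :
    (Function.support (Gfun hb ξ η p)).Finite := by
  apply (ξ.finite_support).subset
  intro i hi
  simp only [Function.mem_support] at hi ⊢
  intro h
  exact hi (by simp [Gfun, h])

lemma smode_eq (hb : ℝ) (ξ η : ℤ →₀ ℂ) (p : ℤ × ℤ) :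
    Smode hb ξ η p = ∑ᶠ i : ℤ, Gfun hb ξ η p i := by
  apply finsum_congr
  intro i
  exact finsum_eq_single _ (i + p.2) fun j hj => by
    rw [wmat_ne hb p i j hj, zero_mul, zero_mul]

/-- The key scalar identity relating exponentials to the sine. -/
lemma scalar_key (hb : ℝ) (v : ℂ) :
    Kconst hb (-v) - Kconst hb v =
      (1 / (2 * (Real.pi : ℂ) * (hb : ℂ))) *
        Complex.sin (2 * (Real.pi : ℂ) * (hb : ℂ) * v) := by
  rw [Kconst, Kconst, Complex.sin]
  rw [show -(2 * (Real.pi : ℂ) * (hb : ℂ) * v) * Complex.I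
      = 2 * (Real.pi : ℂ) * Complex.I * (hb : ℂ) * (-v) by ring]
  rw [show (2 * (Real.pi : ℂ) * (hb : ℂ) * v) * Complex.I
      = 2 * (Real.pi : ℂ) * Complex.I * (hb : ℂ) * v by ring]
  ring

lemma hpt1 (hb : ℝ) (ξ η : ℤ →₀ ℂ) (m n : ℤ × ℤ) (i : ℤ) :
    T1f hb ξ η m n i =
      Kconst hb (-((n.1 : ℂ) * (m.2 : ℂ) - (n.2 : ℂ) * (m.1 : ℂ))) *
        Gfun hb ξ η (m + n) (i - n.2) := by
  obtain ⟨a, rfl⟩ : ∃ a : ℤ, i = a + n.2 := ⟨i - n.2, by ring⟩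
  simp only [T1f, Kconst, Gfun, Wmat, Prod.fst_add, Prod.snd_add, add_sub_cancel_right,
    if_pos rfl, if_true, mul_one]
  rw [show a + (m.2 + n.2) = a + n.2 + m.2 from by ring]
  have hE : Complex.exp (2 * (Real.pi : ℂ) * Complex.I * (hb : ℂ) * (m.1 : ℂ) * (m.2 : ℂ)) *
      Complex.exp (4 * (Real.pi : ℂ) * Complex.I * (hb : ℂ) * (m.1 : ℂ) * ((a + n.2 : ℤ) : ℂ)) *
      (Complex.exp (2 * (Real.pi : ℂ) * Complex.I * (hb : ℂ) * (n.1 : ℂ) * (n.2 : ℂ)) *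
       Complex.exp (4 * (Real.pi : ℂ) * Complex.I * (hb : ℂ) * (n.1 : ℂ) * (a : ℂ))) =
      Complex.exp (2 * (Real.pi : ℂ) * Complex.I * (hb : ℂ) *
        (-((n.1 : ℂ) * (m.2 : ℂ) - (n.2 : ℂ) * (m.1 : ℂ)))) *
      (Complex.exp (2 * (Real.pi : ℂ) * Complex.I * (hb : ℂ) * ((m.1 + n.1 : ℤ) : ℂ) *
          ((m.2 + n.2 : ℤ) : ℂ)) *
       Complex.exp (4 * (Real.pi : ℂ) * Complex.I * (hb : ℂ) * ((m.1 + n.1 : ℤ) : ℂ) * (a : ℂ))) := by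
    rw [← Complex.exp_add, ← Complex.exp_add, ← Complex.exp_add, ← Complex.exp_add,
      ← Complex.exp_add]
    congr 1
    push_cast
    ring
  linear_combination (Complex.I / (4 * (Real.pi : ℂ) * (hb : ℂ)))^2 * ξ a *
    η (a + n.2 + m.2) * hE

lemma hpt2 (hb : ℝ) (ξ η : ℤ →₀ ℂ) (m n : ℤ × ℤ) (i : ℤ) :
    T2f hb ξ η m n i =
      Kconst hb ((n.1 : ℂ) * (m.2 : ℂ) - (n.2 : ℂ) * (m.1 : ℂ)) *
        Gfun hb ξ η (m + n) i := by
  simp only [T2f, Kconst, Gfun, Wmat, Prod.fst_add, Prod.snd_add,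
    if_pos rfl, if_true, mul_one]
  rw [show i + (m.2 + n.2) = i + m.2 + n.2 from by ring]
  have hE : Complex.exp (2 * (Real.pi : ℂ) * Complex.I * (hb : ℂ) * (m.1 : ℂ) * (m.2 : ℂ)) *
      Complex.exp (4 * (Real.pi : ℂ) * Complex.I * (hb : ℂ) * (m.1 : ℂ) * (i : ℂ)) *
      (Complex.exp (2 * (Real.pi : ℂ) * Complex.I * (hb : ℂ) * (n.1 : ℂ) * (n.2 : ℂ)) *
       Complex.exp (4 * (Real.pi : ℂ) * Complex.I * (hb : ℂ) * (n.1 : ℂ) * ((i + m.2 : ℤ) : ℂ))) =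
      Complex.exp (2 * (Real.pi : ℂ) * Complex.I * (hb : ℂ) *
        ((n.1 : ℂ) * (m.2 : ℂ) - (n.2 : ℂ) * (m.1 : ℂ))) *
      (Complex.exp (2 * (Real.pi : ℂ) * Complex.I * (hb : ℂ) * ((m.1 + n.1 : ℤ) : ℂ) *
          ((m.2 + n.2 : ℤ) : ℂ)) *
       Complex.exp (4 * (Real.pi : ℂ) * Complex.I * (hb : ℂ) * ((m.1 + n.1 : ℤ) : ℂ) * (i : ℂ))) := by
    rw [← Complex.exp_add, ← Complex.exp_add, ← Complex.exp_add, ← Complex.exp_add,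
      ← Complex.exp_add]
    congr 1
    push_cast
    ring
  linear_combination (Complex.I / (4 * (Real.pi : ℂ) * (hb : ℂ)))^2 * ξ i *
    η (i + m.2 + n.2) * hE

lemma inner_eval (hb : ℝ) (ξ η : ℤ →₀ ℂ) (m n : ℤ × ℤ) (i : ℤ) :
    (∑ᶠ (j : ℤ) (k : ℤ) (l : ℤ),
        Wmat hb m i j * Wmat hb n k l *
          ((if i = l then (1 : ℂ) else 0) * ξ k * η j -
            (if k = j then (1 : ℂ) else 0) * ξ i * η l)) =
      T1f hb ξ η m n i - T2f hb ξ η m n i := by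
  rw [finsum_eq_single _ (i + m.2) (fun j hj => by
    have h0 : Wmat hb m i j = 0 := wmat_ne hb m i j hj
    simp [h0])]
  rw [finsum_congr (fun k => finsum_eq_single _ (k + n.2) (fun l hl => by
    rw [wmat_ne hb n k l hl, mul_zero, zero_mul]))]
  have hsplit : ∀ k : ℤ,
      Wmat hb m i (i + m.2) * Wmat hb n k (k + n.2) *
        ((if i = k + n.2 then (1 : ℂ) else 0) * ξ k * η (i + m.2) -
          (if k = i + m.2 then (1 : ℂ) else 0) * ξ i * η (k + n.2)) =
      (Wmat hb m i (i + m.2) * Wmat hb n k (k + n.2) *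
        ((if i = k + n.2 then (1 : ℂ) else 0) * ξ k * η (i + m.2))) -
      (Wmat hb m i (i + m.2) * Wmat hb n k (k + n.2) *
        ((if k = i + m.2 then (1 : ℂ) else 0) * ξ i * η (k + n.2))) := fun k => by ring
  rw [finsum_congr hsplit]
  rw [finsum_sub_distrib
    (Set.Finite.subset (Set.finite_singleton (i - n.2)) (by
      intro k hk
      simp only [Function.mem_support] at hk
      simp only [Set.mem_singleton_iff]
      by_contra hne
      have h : ¬ i = k + n.2 := by omega
      exact hk (by simp [h])))
    (Set.Finite.subset (Set.finite_singleton (i + m.2)) (by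
      intro k hk
      simp only [Function.mem_support] at hk
      simp only [Set.mem_singleton_iff]
      by_contra hne
      exact hk (by simp [hne])))]
  rw [finsum_eq_single _ (i - n.2) (fun k hk => by
    have h : ¬ i = k + n.2 := by omega
    simp [h])]
  rw [finsum_eq_single _ (i + m.2) (fun k hk => by simp [hk])]
  rw [show i - n.2 + n.2 = i from by ring]
  simp only [if_pos rfl, if_true, mul_one, T1f, T2f]
  ring

/-- The rank-one modes `S_m` satisfy the sin-algebra Poisson relations: expanding the
canonical brackets `{ξ_i, η_j} = δ_{ij}` by the Leibniz rule,
`Σ_{i,j,k,l} W_{m,ij} W_{n,kl} (δ_{il} ξ_k η_j − δ_{kj} ξ_i η_l)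
 = (1/(2πħ)) sin(2πħ (n₁m₂ − n₂m₁)) S_{m+n}`. -/
theorem stmt16 (hb : ℝ) (hbne : hb ≠ 0) (ξ η : ℤ →₀ ℂ) (m n : ℤ × ℤ) :
    ∑ᶠ (i : ℤ) (j : ℤ) (k : ℤ) (l : ℤ),
        Wmat hb m i j * Wmat hb n k l *
          ((if i = l then (1 : ℂ) else 0) * ξ k * η j -
            (if k = j then (1 : ℂ) else 0) * ξ i * η l) =
      (1 / (2 * (Real.pi : ℂ) * (hb : ℂ))) *
        Complex.sin (2 * (Real.pi : ℂ) * (hb : ℂ) *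
          ((n.1 : ℂ) * (m.2 : ℂ) - (n.2 : ℂ) * (m.1 : ℂ))) *
        Smode hb ξ η (m + n) := by
  set v : ℂ := (n.1 : ℂ) * (m.2 : ℂ) - (n.2 : ℂ) * (m.1 : ℂ) with hv
  rw [finsum_congr (fun i => inner_eval hb ξ η m n i)]
  rw [finsum_congr (fun i => by
    rw [hpt1 hb ξ η m n i, hpt2 hb ξ η m n i] :
      ∀ i : ℤ, T1f hb ξ η m n i - T2f hb ξ η m n i =
        Kconst hb (-v) * Gfun hb ξ η (m + n) (i - n.2) -
        Kconst hb v * Gfun hb ξ η (m + n) i)]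
  have hfin2 : (Function.support fun i => Kconst hb v * Gfun hb ξ η (m + n) i).Finite := by
    apply (Gfun_supp hb ξ η (m + n)).subset
    intro i hi
    simp only [Function.mem_support] at hi ⊢
    exact fun h => hi (by rw [h, mul_zero])
  have hfin1 : (Function.support fun i =>
      Kconst hb (-v) * Gfun hb ξ η (m + n) (i - n.2)).Finite := by
    apply Set.Finite.subset ((Gfun_supp hb ξ η (m + n)).image (· + n.2))
    intro i hi
    simp only [Function.mem_support] at hi
    refine ⟨i - n.2, ?_, by simp⟩
    simp only [Function.mem_support]
    exact fun h => hi (by rw [h, mul_zero])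
  rw [finsum_sub_distrib hfin1 hfin2]
  have hshift : (∑ᶠ i : ℤ, Kconst hb (-v) * Gfun hb ξ η (m + n) (i - n.2)) =
      ∑ᶠ i : ℤ, Kconst hb (-v) * Gfun hb ξ η (m + n) i := by
    have := finsum_comp_equiv (Equiv.subRight n.2)
      (f := fun a => Kconst hb (-v) * Gfun hb ξ η (m + n) a)
    simpa [Equiv.subRight] using this
  rw [hshift]
  rw [← mul_finsum _ _, ← mul_finsum _ _]
  rw [← sub_mul, smode_eq hb ξ η (m + n), scalar_key hb v]
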